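/- arXiv:1007.0048 — 5 statements merged into one kernel-verified Lean document; each statement's English description precedes it below -/
import Mathlib

section
/- If a Euclidean tetrahedron has all six dihedral angles equal, then all six edge lengths are equal, i.e., it is regular. -/
/-!
At a vertex with edge vectors `a, b, c`, the dihedral angle along `a` and the face angles are
related by the spherical law of cosines
`cos D_a · sin ∠(a,b) · sin ∠(a,c) = cos ∠(b,c) - cos ∠(a,b) · cos ∠(a,c)`.
If all dihedral angles have cosine `K`, comparing two of these relations forces the three face
angles at the vertex to be equal, and then their common cosine is `K / (1 - K)`, the same at every
vertex. So all face angles of the tetrahedron are equal, every face is equilateral, and all edges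
have the same length.
-/

noncomputable def dihedralAngle (p q r s : EuclideanSpace ℝ (Fin 3)) : ℝ :=
  InnerProductGeometry.angle
    ((r - p) - ((inner ℝ (r - p) (q - p) : ℝ) / ‖q - p‖ ^ 2) • (q - p))
    ((s - p) - ((inner ℝ (s - p) (q - p) : ℝ) / ‖q - p‖ ^ 2) • (q - p))

open Real RealInnerProductSpace InnerProductGeometry EuclideanGeometry

-- Read `x, y, z` as the cosines and `X, Y, Z` as the sines of the face angles opposite to the
-- edges `a, b, c` at a vertex, and `e1, e2, e3` as the spherical laws of cosines along `a, b, c`.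
theorem eq_of_sphericalCosineLaw {x y z X Y Z K : ℝ} (hX : 0 < X) (hY : 0 < Y) (hZ : 0 < Z)
    (hx : X ^ 2 + x ^ 2 = 1) (hy : Y ^ 2 + y ^ 2 = 1) (hz : Z ^ 2 + z ^ 2 = 1) (hK : K ^ 2 < 1)
    (e1 : K * (Z * Y) = x - z * y) (e2 : K * (Z * X) = y - z * x) :
    x = y := by
  have hsum : (x + y) * (1 - z) = K * Z * (X + Y) := by linear_combination -e1 - e2
  have hdiff : (x - y) * (1 + z) = K * Z * (Y - X) := by linear_combination e2 - e1
  have hsq : (Y - X) * (Y + X) = (x - y) * (x + y) := by linear_combination hy - hx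
  have hprod : (x - y) * (x + y) * ((1 - K ^ 2) * Z ^ 2) = 0 := by
    linear_combination (x - y) * (1 + z) * hsum + K * Z * (X + Y) * hdiff + (x - y) * (x + y) * hz
      + K ^ 2 * Z ^ 2 * hsq
  have hxy : (x - y) * (x + y) = 0 :=
    (mul_eq_zero.mp hprod).resolve_right (mul_ne_zero (by linarith) (pow_pos hZ 2).ne')
  have hYX : Y = X := by
    have := (mul_eq_zero.mp (hsq.trans hxy)).resolve_right (by positivity)
    linarith
  have hz1 : 0 < 1 + z := by nlinarith
  have := (mul_eq_zero.mp (hdiff.trans (by rw [hYX, sub_self, mul_zero]))).resolve_right hz1.ne'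
  linarith

theorem eq_div_one_sub_of_sphericalCosineLaw {x y z X Y Z K : ℝ} (hX : 0 < X) (hY : 0 < Y)
    (hZ : 0 < Z) (hx : X ^ 2 + x ^ 2 = 1) (hy : Y ^ 2 + y ^ 2 = 1) (hz : Z ^ 2 + z ^ 2 = 1)
    (hK : K ^ 2 < 1) (e1 : K * (Z * Y) = x - z * y) (e2 : K * (Z * X) = y - z * x)
    (e3 : K * (Y * X) = z - y * x) :
    z = K / (1 - K) := by
  have hxy : x = y := eq_of_sphericalCosineLaw hX hY hZ hx hy hz hK e1 e2
  have hxz : x = z := eq_of_sphericalCosineLaw hX hZ hY hx hz hy hK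
    (by linear_combination e1) (by linear_combination e3)
  subst hxy hxz
  have hXY : X = Y := (pow_left_inj₀ hX.le hY.le two_ne_zero).mp (by linarith)
  subst hXY
  have hK1 : K < 1 := by nlinarith
  have hx1 : x < 1 := by nlinarith
  rw [eq_div_iff (by linarith)]
  have : (1 - x) * (x - K * (1 + x)) = 0 := by linear_combination -e3 + K * hx
  linarith [(mul_eq_zero.mp this).resolve_left (by linarith)]

namespace InnerProductGeometry
variable {E : Type*} [NormedAddCommGroup E] [InnerProductSpace ℝ E]

-- The component of `b` orthogonal to `a`: `dihedralAngle p q r s` is by definition the angle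
-- between `rejection (q - p) (r - p)` and `rejection (q - p) (s - p)`.
noncomputable def rejection (a b : E) : E := b - (⟪b, a⟫ / ‖a‖ ^ 2) • a

theorem inner_rejection_rejection (a b c : E) :
    ⟪rejection a b, rejection a c⟫ = ⟪b, c⟫ - ⟪a, b⟫ * ⟪a, c⟫ / ‖a‖ ^ 2 := by
  rcases eq_or_ne a 0 with rfl | ha
  · simp [rejection]
  simp only [rejection, inner_sub_left, inner_sub_right, real_inner_smul_left,
    real_inner_smul_right, real_inner_self_eq_norm_sq, real_inner_comm a]
  field_simp
  ring

theorem norm_rejection (a b : E) : ‖rejection a b‖ = ‖b‖ * sin (angle a b) := by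
  rcases eq_or_ne a 0 with rfl | ha
  · simp [rejection]
  rcases eq_or_ne b 0 with rfl | hb
  · simp [rejection]
  refine (pow_left_inj₀ (norm_nonneg _) (by positivity [sin_angle_nonneg a b]) two_ne_zero).mp ?_
  rw [← real_inner_self_eq_norm_sq, inner_rejection_rejection, mul_pow, sin_sq, cos_angle,
    real_inner_self_eq_norm_sq]
  field_simp

theorem cos_angle_rejection_mul_sin_mul_sin {a b c : E} (ha : a ≠ 0) (hb : b ≠ 0)
    (hc : c ≠ 0) :
    cos (angle (rejection a b) (rejection a c)) * (sin (angle a b) * sin (angle a c)) =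
      cos (angle b c) - cos (angle a b) * cos (angle a c) := by
  have key := cos_angle_mul_norm_mul_norm (rejection a b) (rejection a c)
  rw [norm_rejection, norm_rejection, inner_rejection_rejection] at key
  rw [cos_angle b c, cos_angle a b, cos_angle a c]
  have := norm_ne_zero_iff.mpr ha
  have := norm_ne_zero_iff.mpr hb
  have := norm_ne_zero_iff.mpr hc
  field_simp at key ⊢
  linear_combination key

theorem linearIndependent_rejection {a b c : E} (h : LinearIndependent ℝ ![a, b, c]) :
    LinearIndependent ℝ ![rejection a b, rejection a c] := by
  rw [Fintype.linearIndependent_iff] at h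
  refine LinearIndependent.pair_iff.mpr fun s t hst => ?_
  have := h ![-(s * (⟪b, a⟫ / ‖a‖ ^ 2) + t * (⟪c, a⟫ / ‖a‖ ^ 2)), s, t] (by
    simp only [Fin.sum_univ_three, Matrix.cons_val_zero, Matrix.cons_val_one,
      Matrix.cons_val_two, Matrix.head_cons, Matrix.tail_cons]
    simp only [rejection] at hst
    linear_combination (norm := module) hst)
  exact ⟨this 1, this 2⟩

theorem sin_angle_pos_of_linearIndependent {u w : E} (h : LinearIndependent ℝ ![u, w]) :
    0 < sin (angle u w) := by
  refine (sin_angle_nonneg u w).lt_of_ne' fun h0 => ?_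
  rcases sin_eq_zero_iff_angle_eq_zero_or_angle_eq_pi.mp h0 with h0 | h0
  · obtain ⟨-, r, -, rfl⟩ := angle_eq_zero_iff.mp h0
    simpa using LinearIndependent.pair_iff.mp h r (-1) (by simp)
  · obtain ⟨-, r, -, rfl⟩ := angle_eq_pi_iff.mp h0
    simpa using LinearIndependent.pair_iff.mp h r (-1) (by simp)

theorem sin_angle_pos_of_rejection_ne_zero {a b : E} (h : rejection a b ≠ 0) :
    0 < sin (angle a b) := by
  have := norm_pos_iff.mpr h
  rw [norm_rejection] at this
  exact pos_of_mul_pos_right this (norm_nonneg b)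

theorem cos_angle_eq_of_cos_angle_rejection_eq {a b c : E} (h : LinearIndependent ℝ ![a, b, c])
    {K : ℝ} (hKa : cos (angle (rejection a b) (rejection a c)) = K)
    (hKb : cos (angle (rejection b a) (rejection b c)) = K)
    (hKc : cos (angle (rejection c a) (rejection c b)) = K) :
    cos (angle a b) = K / (1 - K) := by
  have h' : LinearIndependent ℝ ![b, a, c] := by
    convert h.comp ![1, 0, 2] (by decide) using 1
    ext i; fin_cases i <;> rfl
  have hra := linearIndependent_rejection h
  have hrb := linearIndependent_rejection h'
  have ha : a ≠ 0 := by simpa using h.ne_zero 0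
  have hb : b ≠ 0 := by simpa using h.ne_zero 1
  have hc : c ≠ 0 := by simpa using h.ne_zero 2
  have hK : K ^ 2 < 1 := by
    have := sin_angle_pos_of_linearIndependent hra
    rw [← hKa]
    nlinarith [sin_sq_add_cos_sq (angle (rejection a b) (rejection a c))]
  have e1 := cos_angle_rejection_mul_sin_mul_sin ha hb hc
  have e2 := cos_angle_rejection_mul_sin_mul_sin hb ha hc
  have e3 := cos_angle_rejection_mul_sin_mul_sin hc ha hb
  rw [hKa] at e1
  rw [hKb, angle_comm b a] at e2
  rw [hKc, angle_comm c a, angle_comm c b] at e3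
  exact eq_div_one_sub_of_sphericalCosineLaw
    (sin_angle_pos_of_rejection_ne_zero (by simpa using hrb.ne_zero 1))
    (sin_angle_pos_of_rejection_ne_zero (by simpa using hra.ne_zero 1))
    (sin_angle_pos_of_rejection_ne_zero (by simpa using hra.ne_zero 0))
    (sin_sq_add_cos_sq _) (sin_sq_add_cos_sq _) (sin_sq_add_cos_sq _) hK e1 e2 e3

end InnerProductGeometry

theorem linearIndependent_vsub_of_affineIndependent {k V P ι : Type*} [Ring k] [AddCommGroup V]
    [Module k V] [AddTorsor V P] {p : ι → P} (hp : AffineIndependent k p) {i j l m : ι}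
    (hj : j ≠ i) (hl : l ≠ i) (hm : m ≠ i) (hjl : j ≠ l) (hjm : j ≠ m) (hlm : l ≠ m) :
    LinearIndependent k ![p j -ᵥ p i, p l -ᵥ p i, p m -ᵥ p i] := by
  have hinj : Function.Injective (![⟨j, hj⟩, ⟨l, hl⟩, ⟨m, hm⟩] : Fin 3 → {x // x ≠ i}) := by
    intro s r
    fin_cases s <;> fin_cases r <;>
      simp [Subtype.ext_iff, hjl, hjm, hlm, hjl.symm, hjm.symm, hlm.symm]
  convert ((affineIndependent_iff_linearIndependent_vsub k p i).mp hp).comp _ hinj using 1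
  ext n; fin_cases n <;> rfl

theorem dist_eq_dist_of_cos_angle_eq {V P ι : Type*} [NormedAddCommGroup V]
    [InnerProductSpace ℝ V] [MetricSpace P] [NormedAddTorsor V P] {p : ι → P} {t : ℝ} (ht : t ≠ -1)
    (h : ∀ i j k, i ≠ j → i ≠ k → j ≠ k → cos (∠ (p j) (p i) (p k)) = t) {i j k : ι}
    (hij : i ≠ j) (hik : i ≠ k) : dist (p i) (p j) = dist (p i) (p k) := by
  rcases eq_or_ne j k with rfl | hjk
  · rfl
  refine dist_eq_of_angle_eq_angle_of_angle_ne_pi ?_ fun hπ => ht ?_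
  · exact injOn_cos ⟨angle_nonneg _ _ _, angle_le_pi _ _ _⟩
      ⟨angle_nonneg _ _ _, angle_le_pi _ _ _⟩
      ((h j i k hij.symm hjk hik).trans (h k i j hik.symm hjk.symm hij).symm)
  · rw [← h i j k hij hik hjk, hπ, cos_pi]

theorem dist_eq_dist_of_forall_isosceles {P ι : Type*} [MetricSpace P] {p : ι → P}
    (h : ∀ i j k, i ≠ j → i ≠ k → dist (p i) (p j) = dist (p i) (p k)) {i j k l : ι}
    (hij : i ≠ j) (hkl : k ≠ l) : dist (p i) (p j) = dist (p k) (p l) := by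
  rcases eq_or_ne i k with rfl | hik
  · exact h i j l hij hkl
  calc dist (p i) (p j) = dist (p i) (p k) := h i j k hij hik
    _ = dist (p k) (p i) := dist_comm _ _
    _ = dist (p k) (p l) := h k i l hik.symm hkl

theorem div_one_sub_ne_neg_one (K : ℝ) : K / (1 - K) ≠ -1 := by
  intro h
  rcases eq_or_ne (1 - K) 0 with h0 | h0
  · simp [h0] at h
  · rw [div_eq_iff h0] at h
    linarith

theorem cos_angle_eq_of_dihedralAngle_eq {v : Fin 4 → EuclideanSpace ℝ (Fin 3)}
    (hnd : AffineIndependent ℝ v) {β : ℝ}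
    (hβ : ∀ i j k l : Fin 4, ({i, j, k, l} : Finset (Fin 4)) = Finset.univ →
      dihedralAngle (v i) (v j) (v k) (v l) = β)
    {i j k : Fin 4} (hij : i ≠ j) (hik : i ≠ k) (hjk : j ≠ k) :
    cos (∠ (v j) (v i) (v k)) = cos β / (1 - cos β) := by
  obtain ⟨l, hli, hlj, hlk⟩ : ∃ l, l ≠ i ∧ l ≠ j ∧ l ≠ k := by revert i j k; decide
  have huniv : ∀ {a b c d : Fin 4}, a ≠ b → a ≠ c → a ≠ d → b ≠ c → b ≠ d → c ≠ d →
      ({a, b, c, d} : Finset (Fin 4)) = Finset.univ := by decide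
  exact cos_angle_eq_of_cos_angle_rejection_eq
    (linearIndependent_vsub_of_affineIndependent hnd hij.symm hik.symm hli hjk hlj.symm hlk.symm)
    (congrArg cos (hβ i j k l (huniv hij hik hli.symm hjk hlj.symm hlk.symm)))
    (congrArg cos (hβ i k j l (huniv hik hij hli.symm hjk.symm hlk.symm hlj.symm)))
    (congrArg cos (hβ i l j k (huniv hli.symm hij hik hlj hlk hjk)))

/-- If all six dihedral angles of a nondegenerate Euclidean tetrahedron are equal, then all
six edge lengths are equal, i.e. the tetrahedron is regular. -/
theorem equal_dihedral_angles_implies_regular (v : Fin 4 → EuclideanSpace ℝ (Fin 3))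
    (hnd : AffineIndependent ℝ v) (β : ℝ)
    (hβ : ∀ i j k l : Fin 4, ({i, j, k, l} : Finset (Fin 4)) = Finset.univ →
      dihedralAngle (v i) (v j) (v k) (v l) = β) :
    ∃ a : ℝ, ∀ i j : Fin 4, i ≠ j → dist (v i) (v j) = a := by
  have hface : ∀ i j k : Fin 4, i ≠ j → i ≠ k → j ≠ k →
      cos (∠ (v j) (v i) (v k)) = cos β / (1 - cos β) :=
    fun _ _ _ => cos_angle_eq_of_dihedralAngle_eq hnd hβ
  have hisosceles : ∀ i j k : Fin 4, i ≠ j → i ≠ k → dist (v i) (v j) = dist (v i) (v k) :=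
    fun _ _ _ => dist_eq_dist_of_cos_angle_eq (div_one_sub_ne_neg_one (cos β)) hface
  exact ⟨dist (v 0) (v 1), fun i j hij =>
    dist_eq_dist_of_forall_isosceles hisosceles hij (by decide)⟩
end

section
/- In an equihedral tetrahedron, every face is an acute triangle, i.e., all face angles are strictly less than π/2. -/
/-!
Put the apex `p` of a face `a p b` at the origin and let `u, w, x` be the edges from `p` to the
other three vertices `a, b, c`. Equality of opposite edges says `‖u - w‖ = ‖x‖`, `‖u - x‖ = ‖w‖`,
`‖w - x‖ = ‖u‖`, and expanding these gives `4 ⟪u, w⟫ = ‖u + w - x‖²`. The vector `u + w - x` is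
`(a - p) - (c - b)`, which vanishes only if `p, a, c, b` is a parallelogram; affine independence
rules that out, so `⟪u, w⟫ > 0` and the angle at `p` is acute.
-/

open EuclideanGeometry InnerProductGeometry Real RealInnerProductSpace

theorem InnerProductGeometry.angle_lt_pi_div_two_of_inner_pos {V : Type*}
    [NormedAddCommGroup V] [InnerProductSpace ℝ V] {x y : V} (h : 0 < ⟪x, y⟫) :
    angle x y < π / 2 := by
  have hx : x ≠ 0 := by rintro rfl; simp at h
  have hy : y ≠ 0 := by rintro rfl; simp at h
  rw [angle, arccos_lt_pi_div_two]
  exact div_pos h (mul_pos (norm_pos_iff.mpr hx) (norm_pos_iff.mpr hy))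

theorem four_mul_inner_eq_norm_add_sub_sq {V : Type*} [NormedAddCommGroup V]
    [InnerProductSpace ℝ V] {u w x : V} (huw : ‖u - w‖ = ‖x‖) (hux : ‖u - x‖ = ‖w‖)
    (hwx : ‖w - x‖ = ‖u‖) :
    4 * ⟪u, w⟫ = ‖u + w - x‖ ^ 2 := by
  have e₁ := congrArg (· ^ 2) huw
  have e₂ := congrArg (· ^ 2) hux
  have e₃ := congrArg (· ^ 2) hwx
  simp only [norm_sub_sq_real] at e₁ e₂ e₃
  rw [norm_sub_sq_real, norm_add_sq_real, inner_add_left]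
  linear_combination -e₁ - e₂ - e₃

theorem AffineIndependent.vsub_ne_vsub {k V P ι : Type*} [Ring k] [Nontrivial k]
    [AddCommGroup V] [Module k V] [AddTorsor V P] {p : ι → P} (ha : AffineIndependent k p)
    {i j m n : ι} (hji : j ≠ i) (hjm : j ≠ m) (hjn : j ≠ n) :
    p j -ᵥ p i ≠ p n -ᵥ p m := by
  intro h
  have hmem : p j ∈ affineSpan k (p '' {i, m, n}) := by
    rw [← vsub_vadd (p j) (p i), h]
    exact vadd_mem_affineSpan_of_mem_affineSpan_of_mem_vectorSpan
      (mem_affineSpan k (by simp)) (vsub_mem_vectorSpan k (by simp) (by simp))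
  rw [ha.mem_affineSpan_iff] at hmem
  simp_all

namespace EuclideanGeometry

variable {V P : Type*} [NormedAddCommGroup V] [InnerProductSpace ℝ V] [MetricSpace P]
  [NormedAddTorsor V P]

theorem angle_lt_pi_div_two_of_dist_eq_of_vsub_ne {p a b c : P} (hab : dist a b = dist p c)
    (hac : dist a c = dist p b) (hbc : dist b c = dist p a) (hne : a -ᵥ p ≠ c -ᵥ b) :
    ∠ a p b < π / 2 := by
  have hnorm : ∀ q r : P, dist q r = ‖(q -ᵥ p) - (r -ᵥ p)‖ := fun q r => by
    rw [vsub_sub_vsub_cancel_right, dist_eq_norm_vsub]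
  have key := four_mul_inner_eq_norm_add_sub_sq (u := a -ᵥ p) (w := b -ᵥ p) (x := c -ᵥ p)
    (by rw [← hnorm, hab, dist_comm, dist_eq_norm_vsub])
    (by rw [← hnorm, hac, dist_comm, dist_eq_norm_vsub])
    (by rw [← hnorm, hbc, dist_comm, dist_eq_norm_vsub])
  have hdiag : (a -ᵥ p) + (b -ᵥ p) - (c -ᵥ p) = (a -ᵥ p) - (c -ᵥ b) := by
    rw [← vsub_sub_vsub_cancel_right c b p]; abel
  rw [hdiag] at key
  apply angle_lt_pi_div_two_of_inner_pos
  have := pow_pos (norm_pos_iff.mpr (sub_ne_zero.mpr hne)) 2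
  linarith

end EuclideanGeometry

def IsEquihedral {P : Type*} [Dist P] (v : Fin 4 → P) : Prop :=
  ∀ i j k l, i ≠ j → i ≠ k → i ≠ l → j ≠ k → j ≠ l → k ≠ l →
    dist (v i) (v j) = dist (v k) (v l)

theorem isEquihedral_of_dist_eq {P : Type*} [PseudoMetricSpace P] {v : Fin 4 → P}
    (h01 : dist (v 0) (v 1) = dist (v 2) (v 3)) (h02 : dist (v 0) (v 2) = dist (v 1) (v 3))
    (h03 : dist (v 0) (v 3) = dist (v 1) (v 2)) : IsEquihedral v := by
  intro i j k l
  fin_cases i <;> fin_cases j <;> fin_cases k <;> fin_cases l <;>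
    simp [h01, h02, h03] <;> grind [dist_comm]

theorem IsEquihedral.angle_lt_pi_div_two {V P : Type*} [NormedAddCommGroup V]
    [InnerProductSpace ℝ V] [MetricSpace P] [NormedAddTorsor V P] {v : Fin 4 → P}
    (hv : IsEquihedral v) (hind : AffineIndependent ℝ v) {i j k : Fin 4} (hij : i ≠ j)
    (hik : i ≠ k) (hjk : j ≠ k) :
    ∠ (v j) (v i) (v k) < π / 2 := by
  obtain ⟨l, hli, hlj, hlk⟩ : ∃ l : Fin 4, l ≠ i ∧ l ≠ j ∧ l ≠ k := by
    revert i j k; decide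
  exact angle_lt_pi_div_two_of_dist_eq_of_vsub_ne
    (hv j k i l hjk hij.symm hlj.symm hik.symm hlk.symm hli.symm)
    (hv j l i k hlj.symm hij.symm hjk hli hlk hik)
    (hv k l i j hlk.symm hik.symm hjk.symm hli hlj hij)
    (hind.vsub_ne_vsub hij.symm hjk hlj.symm)

/-- In a nondegenerate equihedral tetrahedron, every face is an acute triangle: all face
angles are strictly less than `π/2`. -/
theorem equihedral_faces_acute (v : Fin 4 → EuclideanSpace ℝ (Fin 3))
    (hnd : AffineIndependent ℝ v)
    (h1 : dist (v 0) (v 1) = dist (v 2) (v 3))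
    (h2 : dist (v 0) (v 2) = dist (v 1) (v 3))
    (h3 : dist (v 0) (v 3) = dist (v 1) (v 2)) :
    ∀ i j k : Fin 4, i ≠ j → i ≠ k → j ≠ k →
      EuclideanGeometry.angle (v j) (v i) (v k) < Real.pi / 2 :=
  fun _ _ _ hij hik hjk =>
    (isEquihedral_of_dist_eq h1 h2 h3).angle_lt_pi_div_two hnd hij hik hjk
end

section
/- Given positive background edge lengths L_ij on a tetrahedron 1234, there exist conformal factors f_1, f_2, f_3, f_4 ∈ R, unique up to adding a common constant, such that the conformally deformed lengths ℓ_ij = exp((f_i+f_j)/2)·L_ij satisfy ℓ_12 = ℓ_34, ℓ_13 = ℓ_24, and ℓ_14 = ℓ_23. Explicitly, one can take f_4 = 0, e^{f_1/2} = sqrt(L_24·L_34/(L_12·L_13)), e^{f_2/2} = sqrt(L_14·L_34/(L_23·L_12)), e^{f_3/2} = sqrt(L_14·L_24/(L_13·L_23)). -/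
/-!
With `λ_ij = log L_ij`, the equihedral conditions are the linear equations
`(f_i + f_j)/2 + λ_ij = (f_k + f_l)/2 + λ_kl` for the three pairs of opposite edges. Adding
the two equations through vertex `i ≠ 3` eliminates the other two factors and leaves
`f_i - f_3` in terms of the `λ`'s alone; conversely these three differences imply all three
equations. Hence the solutions form a single line `f + c·(1,1,1,1)`.
-/

open Real

namespace Tetrahedron

lemma exp_mul_eq_exp_mul_iff {x y L L' : ℝ} (hL : 0 < L) (hL' : 0 < L') :
    exp x * L = exp y * L' ↔ x + log L = y + log L' := by
  rw [← exp_log hL, ← exp_log hL', ← exp_add, ← exp_add, exp_eq_exp, log_exp, log_exp]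

lemma log_mul_div_mul {p q r s : ℝ} (hp : 0 < p) (hq : 0 < q) (hr : 0 < r) (hs : 0 < s) :
    log (p * q / (r * s)) = log p + log q - log r - log s := by
  rw [log_div (by positivity) (by positivity), log_mul hp.ne' hq.ne', log_mul hr.ne' hs.ne']
  ring

lemma exp_log_div_two {a : ℝ} (ha : 0 < a) : exp (log a / 2) = √a := by
  rw [exp_half, exp_log ha]

def IsEquihedralDeformation (L : Fin 4 → Fin 4 → ℝ) (f : Fin 4 → ℝ) : Prop :=
  exp ((f 0 + f 1) / 2) * L 0 1 = exp ((f 2 + f 3) / 2) * L 2 3 ∧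
    exp ((f 0 + f 2) / 2) * L 0 2 = exp ((f 1 + f 3) / 2) * L 1 3 ∧
    exp ((f 0 + f 3) / 2) * L 0 3 = exp ((f 1 + f 2) / 2) * L 1 2

noncomputable def equihedralFactors (L : Fin 4 → Fin 4 → ℝ) : Fin 4 → ℝ :=
  ![log (L 1 3 * L 2 3 / (L 0 1 * L 0 2)), log (L 0 3 * L 2 3 / (L 1 2 * L 0 1)),
    log (L 0 3 * L 1 3 / (L 0 2 * L 1 2)), 0]

variable {L : Fin 4 → Fin 4 → ℝ}

theorem isEquihedralDeformation_iff (hL : ∀ i j, 0 < L i j) (f : Fin 4 → ℝ) :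
    IsEquihedralDeformation L f ↔
      f 0 - f 3 = equihedralFactors L 0 ∧ f 1 - f 3 = equihedralFactors L 1 ∧
        f 2 - f 3 = equihedralFactors L 2 := by
  simp only [IsEquihedralDeformation, equihedralFactors, exp_mul_eq_exp_mul_iff (hL _ _) (hL _ _),
    log_mul_div_mul (hL _ _) (hL _ _) (hL _ _) (hL _ _), Matrix.cons_val]
  constructor <;> rintro ⟨h₁, h₂, h₃⟩ <;> refine ⟨?_, ?_, ?_⟩ <;> linarith

theorem isEquihedralDeformation_iff_exists_add_const (hL : ∀ i j, 0 < L i j) (g : Fin 4 → ℝ) :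
    IsEquihedralDeformation L g ↔ ∃ c : ℝ, ∀ i, g i = equihedralFactors L i + c := by
  rw [isEquihedralDeformation_iff hL]
  constructor
  · rintro ⟨h₀, h₁, h₂⟩
    simp only [equihedralFactors, Matrix.cons_val] at h₀ h₁ h₂
    refine ⟨g 3, fun i => ?_⟩
    fin_cases i <;> simp [equihedralFactors] <;> linarith
  · rintro ⟨c, hc⟩
    simp [hc, equihedralFactors]

end Tetrahedron

open Tetrahedron in
theorem equihedral_in_every_conformal_class_general (L : Fin 4 → Fin 4 → ℝ)
    (hL : ∀ i j, 0 < L i j) :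
    ∃ f : Fin 4 → ℝ,
      (f 3 = 0 ∧
        Real.exp (f 0 / 2) = Real.sqrt (L 1 3 * L 2 3 / (L 0 1 * L 0 2)) ∧
        Real.exp (f 1 / 2) = Real.sqrt (L 0 3 * L 2 3 / (L 1 2 * L 0 1)) ∧
        Real.exp (f 2 / 2) = Real.sqrt (L 0 3 * L 1 3 / (L 0 2 * L 1 2))) ∧
      (Real.exp ((f 0 + f 1) / 2) * L 0 1 = Real.exp ((f 2 + f 3) / 2) * L 2 3 ∧
        Real.exp ((f 0 + f 2) / 2) * L 0 2 = Real.exp ((f 1 + f 3) / 2) * L 1 3 ∧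
        Real.exp ((f 0 + f 3) / 2) * L 0 3 = Real.exp ((f 1 + f 2) / 2) * L 1 2) ∧
      (∀ g : Fin 4 → ℝ,
        (Real.exp ((g 0 + g 1) / 2) * L 0 1 = Real.exp ((g 2 + g 3) / 2) * L 2 3 ∧
          Real.exp ((g 0 + g 2) / 2) * L 0 2 = Real.exp ((g 1 + g 3) / 2) * L 1 3 ∧
          Real.exp ((g 0 + g 3) / 2) * L 0 3 = Real.exp ((g 1 + g 2) / 2) * L 1 2) →
        ∃ c : ℝ, ∀ i, g i = f i + c) := by
  refine ⟨equihedralFactors L, ⟨rfl, ?_, ?_, ?_⟩,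
    (isEquihedralDeformation_iff_exists_add_const hL _).mpr ⟨0, by simp⟩,
    fun g hg => (isEquihedralDeformation_iff_exists_add_const hL g).mp hg⟩ <;>
  exact exp_log_div_two (div_pos (mul_pos (hL _ _) (hL _ _)) (mul_pos (hL _ _) (hL _ _)))

/-- Given positive background edge lengths `L i j` on a tetrahedron (vertices `0,1,2,3`),
there exist conformal factors, unique up to an additive constant, making the deformed
metric `ℓ_ij = exp((f_i+f_j)/2)·L_ij` equihedral; explicitly one can take `f 3 = 0`,
`exp (f 0 / 2) = sqrt (L13·L23/(L01·L02))`, `exp (f 1 / 2) = sqrt (L03·L23/(L12·L01))`,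
`exp (f 2 / 2) = sqrt (L03·L13/(L02·L12))`. -/
theorem equihedral_in_every_conformal_class (L : Fin 4 → Fin 4 → ℝ)
    (hL : ∀ i j, 0 < L i j) (hsym : ∀ i j, L i j = L j i) :
    ∃ f : Fin 4 → ℝ,
      (f 3 = 0 ∧
        Real.exp (f 0 / 2) = Real.sqrt (L 1 3 * L 2 3 / (L 0 1 * L 0 2)) ∧
        Real.exp (f 1 / 2) = Real.sqrt (L 0 3 * L 2 3 / (L 1 2 * L 0 1)) ∧
        Real.exp (f 2 / 2) = Real.sqrt (L 0 3 * L 1 3 / (L 0 2 * L 1 2))) ∧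
      (Real.exp ((f 0 + f 1) / 2) * L 0 1 = Real.exp ((f 2 + f 3) / 2) * L 2 3 ∧
        Real.exp ((f 0 + f 2) / 2) * L 0 2 = Real.exp ((f 1 + f 3) / 2) * L 1 3 ∧
        Real.exp ((f 0 + f 3) / 2) * L 0 3 = Real.exp ((f 1 + f 2) / 2) * L 1 2) ∧
      (∀ g : Fin 4 → ℝ,
        (Real.exp ((g 0 + g 1) / 2) * L 0 1 = Real.exp ((g 2 + g 3) / 2) * L 2 3 ∧
          Real.exp ((g 0 + g 2) / 2) * L 0 2 = Real.exp ((g 1 + g 3) / 2) * L 1 3 ∧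
          Real.exp ((g 0 + g 3) / 2) * L 0 3 = Real.exp ((g 1 + g 2) / 2) * L 1 2) →
        ∃ c : ℝ, ∀ i, g i = f i + c) :=
  equihedral_in_every_conformal_class_general L hL
end

section
/- For an ε-fat piecewise flat three-manifold with maximal edge degree D, the volume-normalized Einstein-Hilbert-Regge functional satisfies VEHR ≥ min{0, 2π - πD}·ε^{-1/3}. -/
/-!
At an edge of degree at most `D` the dihedral angles sum to less than `π D`, so its curvature
`2π - Σ β` is at least `c = 2π - π D`; hence `EHR ≥ c L` with `L = Σ ℓ_e`. If `c ≥ 0` this makes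
`EHR` nonnegative; if `c < 0` fatness supplies the upper bound `L ≤ (V / ε)^(1/3)`.
-/

open Finset Real

lemma sum_le_mul_of_card_le {ι : Type*} [Fintype ι] {f : ι → ℝ} {a : ℝ} {D : ℕ}
    (ha : 0 ≤ a) (hf : ∀ i, f i ≤ a) (hcard : Fintype.card ι ≤ D) : ∑ i, f i ≤ a * D :=
  calc ∑ i, f i ≤ Fintype.card ι • a := sum_le_card_nsmul _ _ _ fun i _ => hf i
    _ = a * Fintype.card ι := by rw [nsmul_eq_mul, mul_comm]
    _ ≤ a * D := by gcongr

lemma mul_sum_length_le_EHR {E : Type*} [Fintype E] {ℓ : E → ℝ} (hℓ : ∀ e, 0 ≤ ℓ e)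
    {deg : E → ℕ} {β : (e : E) → Fin (deg e) → ℝ} (hβ : ∀ e i, β e i ≤ π)
    {D : ℕ} (hD : ∀ e, deg e ≤ D) :
    (2 * π - π * D) * ∑ e, ℓ e ≤ ∑ e, (2 * π - ∑ i, β e i) * ℓ e := by
  rw [mul_sum]
  refine sum_le_sum fun e _ => mul_le_mul_of_nonneg_right ?_ (hℓ e)
  have := sum_le_mul_of_card_le pi_pos.le (hβ e) ((Fintype.card_fin _).trans_le (hD e))
  linarith

lemma le_rpow_of_le_div_pow_three {L V ε : ℝ} (hL : 0 ≤ L) (hV : 0 ≤ V) (hε : 0 < ε)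
    (hfat : ε ≤ V / L ^ 3) : L ≤ ε ^ (-(1 : ℝ) / 3) * V ^ ((1 : ℝ) / 3) := by
  have hcube : L ^ 3 ≤ V / ε := by
    rw [le_div_iff₀ hε, mul_comm]
    rcases hL.eq_or_lt with rfl | hL
    · simpa using hV
    · exact (le_div_iff₀ (pow_pos hL 3)).mp hfat
  calc L = (L ^ 3) ^ ((1 : ℝ) / 3) := by
        rw [one_div]; exact_mod_cast (pow_rpow_inv_natCast hL three_ne_zero).symm
    _ ≤ (V / ε) ^ ((1 : ℝ) / 3) := rpow_le_rpow (by positivity) hcube (by norm_num)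
    _ = ε ^ (-(1 : ℝ) / 3) * V ^ ((1 : ℝ) / 3) := by
        rw [div_rpow hV hε.le, div_eq_mul_inv, ← rpow_neg hε.le, neg_div, mul_comm]

lemma min_zero_mul_le {c L K X : ℝ} (hL : 0 ≤ L) (hLK : L ≤ K) (h : c * L ≤ X) :
    min 0 c * K ≤ X :=
  calc min 0 c * K ≤ min 0 c * L := mul_le_mul_of_nonpos_left hLK (min_le_left _ _)
    _ ≤ c * L := mul_le_mul_of_nonneg_right (min_le_right _ _) hL
    _ ≤ X := h

theorem VEHR_lower_bound_general {E : Type*} [Fintype E]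
    (ℓ : E → ℝ) (hℓ : ∀ e, 0 < ℓ e)
    (deg : E → ℕ) (β : (e : E) → Fin (deg e) → ℝ)
    (hβ : ∀ e i, 0 < β e i ∧ β e i < Real.pi)
    (D : ℕ) (hD : ∀ e, deg e ≤ D)
    (V : ℝ) (hV : 0 < V) (ε : ℝ) (hε : 0 < ε)
    (hfat : ε ≤ V / (∑ e, ℓ e) ^ 3) :
    min 0 (2 * Real.pi - Real.pi * D) * ε ^ (-(1 : ℝ) / 3) ≤
      (∑ e, (2 * Real.pi - ∑ i, β e i) * ℓ e) / V ^ ((1 : ℝ) / 3) := by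
  have hL : 0 ≤ ∑ e, ℓ e := sum_nonneg fun e _ => (hℓ e).le
  rw [le_div_iff₀ (rpow_pos_of_pos hV _), mul_assoc]
  exact min_zero_mul_le hL (le_rpow_of_le_div_pow_three hL hV.le hε hfat)
    (mul_sum_length_le_EHR (fun e => (hℓ e).le) (fun e i => (hβ e i).2.le) hD)

/-- For an `ε`-fat piecewise flat three-manifold with maximal edge degree `D`, the
volume-normalized Einstein-Hilbert-Regge functional satisfies
`VEHR ≥ min {0, 2π - πD} · ε^(-1/3)`. Here `E` is the set of edges, `ℓ e > 0` the edge
lengths, `β e i ∈ (0,π)` the dihedral angles at `e`, `deg e ≤ D` the edge degrees,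
`V > 0` the total volume, and fatness means `V / (Σ ℓ_e)³ ≥ ε > 0`. -/
theorem VEHR_lower_bound {E : Type*} [Fintype E] [Nonempty E]
    (ℓ : E → ℝ) (hℓ : ∀ e, 0 < ℓ e)
    (deg : E → ℕ) (β : (e : E) → Fin (deg e) → ℝ)
    (hβ : ∀ e i, 0 < β e i ∧ β e i < Real.pi)
    (D : ℕ) (hD : ∀ e, deg e ≤ D)
    (V : ℝ) (hV : 0 < V) (ε : ℝ) (hε : 0 < ε)
    (hfat : ε ≤ V / (∑ e, ℓ e) ^ 3) :
    min 0 (2 * Real.pi - Real.pi * D) * ε ^ (-(1 : ℝ) / 3) ≤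
      (∑ e, (2 * Real.pi - ∑ i, β e i) * ℓ e) / V ^ ((1 : ℝ) / 3) :=
  VEHR_lower_bound_general ℓ hℓ deg β hβ D hD V hV ε hε hfat
end

section
/- Let H be the 6×6 symmetric matrix with diagonal entries b (positions 1,6) and d (positions 2,3,4,5), with H_{16} = H_{61} = e, H_{25} = H_{52} = H_{34} = H_{43} = f, entries a in positions (1,j) and (6,j) for j ∈ {2,3,4,5} (and symmetrically), and entries c in the remaining off-diagonal positions among {2,3,4,5}. Suppose (t,1,1,1,1,t) is in the kernel of H for some t > 0. Then the vectors (1,0,0,0,0,-1); (0,1,0,0,-1,0) and (0,0,1,-1,0,0); (0,1,-1,-1,1,0); and (1/t,-1/2,-1/2,-1/2,-1/2,1/t) are eigenvectors of H with eigenvalues b - e; d - f; -4c - 2ta; and -(2t + 4/t)a respectively. -/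
/-!
Vectors antisymmetric under one of the symmetries `0 ↔ 5`, `(1 4)(2 3)`, `(1 2)(3 4)` of the
pattern of `hessMatrix` are eigenvectors for all parameters; the kernel condition only rewrites
the eigenvalue `d + f - 2c` of `(0,1,-1,-1,1,0)` as `-4c - 2ta`. The fully symmetric vectors
form an invariant plane on which `hessMatrix` acts symmetrically with kernel vector
`(t,1,1,1,1,t)`, so the vector of that plane orthogonal to it is an eigenvector too. Concretely,
the kernel condition reads `t (b + e) + 4a = 0` and `2c + d + f + 2ta = 0`, and solving it for
`e` and `f` turns the last eigenvalue equation into a polynomial identity in `t` and `t⁻¹`.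
-/

/-- The symmetric `6×6` matrix arising as the Hessian of a normalized EHR functional along
the family `ℓ(t) = (t,1,1,1,1,t)`. -/
def hessMatrix (a b c d e f : ℝ) : Matrix (Fin 6) (Fin 6) ℝ :=
  !![b, a, a, a, a, e;
     a, d, c, c, f, a;
     a, c, d, f, c, a;
     a, c, f, d, c, a;
     a, f, c, c, d, a;
     e, a, a, a, a, b]

section

variable (a b c d e f : ℝ)

theorem hessMatrix_mulVec (x₀ x₁ x₂ x₃ x₄ x₅ : ℝ) :
    (hessMatrix a b c d e f).mulVec ![x₀, x₁, x₂, x₃, x₄, x₅] =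
      ![b * x₀ + a * (x₁ + x₂ + x₃ + x₄) + e * x₅,
        a * (x₀ + x₅) + d * x₁ + c * (x₂ + x₃) + f * x₄,
        a * (x₀ + x₅) + d * x₂ + c * (x₁ + x₄) + f * x₃,
        a * (x₀ + x₅) + d * x₃ + c * (x₁ + x₄) + f * x₂,
        a * (x₀ + x₅) + d * x₄ + c * (x₂ + x₃) + f * x₁,
        e * x₀ + a * (x₁ + x₂ + x₃ + x₄) + b * x₅] := by
  ext i
  fin_cases i <;>
    simp only [Matrix.mulVec, dotProduct, Fin.sum_univ_six, hessMatrix, Matrix.of_apply,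
      Matrix.cons_val', Matrix.cons_val_fin_one, Matrix.cons_val, Matrix.cons_val_zero,
      Matrix.cons_val_one, Fin.isValue, Fin.reduceFinMk, Fin.zero_eta, Fin.mk_one] <;>
    ring

theorem hessMatrix_mulVec_eq_zero_iff (t : ℝ) :
    (hessMatrix a b c d e f).mulVec ![t, 1, 1, 1, 1, t] = 0 ↔
      t * (b + e) + 4 * a = 0 ∧ 2 * c + d + f + 2 * t * a = 0 := by
  rw [hessMatrix_mulVec]
  simp only [← Matrix.cons_zero_zero, Matrix.vecCons_inj]
  constructor
  · rintro ⟨h₀, h₁, -⟩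
    constructor <;> linarith
  · rintro ⟨h₀, h₁⟩
    exact ⟨by linarith, by linarith, by linarith, by linarith, by linarith, by linarith,
      Subsingleton.elim _ _⟩

theorem hessMatrix_mulVec_outer_antisymm :
    (hessMatrix a b c d e f).mulVec ![1, 0, 0, 0, 0, -1] = (b - e) • ![1, 0, 0, 0, 0, -1] := by
  rw [hessMatrix_mulVec]
  simp only [Matrix.smul_cons, smul_eq_mul, Matrix.smul_empty, Matrix.vecCons_inj, and_true]
  refine ⟨?_, ?_, ?_, ?_, ?_, ?_⟩ <;> ring

theorem hessMatrix_mulVec_inner_antisymm₁₄ :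
    (hessMatrix a b c d e f).mulVec ![0, 1, 0, 0, -1, 0] = (d - f) • ![0, 1, 0, 0, -1, 0] := by
  rw [hessMatrix_mulVec]
  simp only [Matrix.smul_cons, smul_eq_mul, Matrix.smul_empty, Matrix.vecCons_inj, and_true]
  refine ⟨?_, ?_, ?_, ?_, ?_, ?_⟩ <;> ring

theorem hessMatrix_mulVec_inner_antisymm₂₃ :
    (hessMatrix a b c d e f).mulVec ![0, 0, 1, -1, 0, 0] = (d - f) • ![0, 0, 1, -1, 0, 0] := by
  rw [hessMatrix_mulVec]
  simp only [Matrix.smul_cons, smul_eq_mul, Matrix.smul_empty, Matrix.vecCons_inj, and_true]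
  refine ⟨?_, ?_, ?_, ?_, ?_, ?_⟩ <;> ring

theorem hessMatrix_mulVec_alternating :
    (hessMatrix a b c d e f).mulVec ![0, 1, -1, -1, 1, 0] =
      (d + f - 2 * c) • ![0, 1, -1, -1, 1, 0] := by
  rw [hessMatrix_mulVec]
  simp only [Matrix.smul_cons, smul_eq_mul, Matrix.smul_empty, Matrix.vecCons_inj, and_true]
  refine ⟨?_, ?_, ?_, ?_, ?_, ?_⟩ <;> ring

theorem hessMatrix_mulVec_symm_orthogonal {t : ℝ} (ht : t ≠ 0)
    (h₀ : t * (b + e) + 4 * a = 0) (h₁ : 2 * c + d + f + 2 * t * a = 0) :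
    (hessMatrix a b c d e f).mulVec ![1 / t, -1 / 2, -1 / 2, -1 / 2, -1 / 2, 1 / t] =
      (-(2 * t + 4 / t) * a) • ![1 / t, -1 / 2, -1 / 2, -1 / 2, -1 / 2, 1 / t] := by
  obtain rfl : e = -(b + 4 * a / t) := by field_simp; linear_combination h₀
  obtain rfl : f = -(2 * c + d + 2 * t * a) := by linear_combination h₁
  rw [hessMatrix_mulVec]
  simp only [Matrix.smul_cons, smul_eq_mul, Matrix.smul_empty, Matrix.vecCons_inj, and_true]
  refine ⟨?_, ?_, ?_, ?_, ?_, ?_⟩ <;> field_simp <;> ring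

end

/-- If `(t,1,1,1,1,t)` (with `t > 0`) lies in the kernel of the matrix `hessMatrix`,
then the listed vectors are eigenvectors with eigenvalues `b - e`, `d - f`, `d - f`,
`-4c - 2ta` and `-(2t + 4/t)a` respectively. -/
theorem hessMatrix_eigenvectors (a b c d e f t : ℝ) (ht : 0 < t)
    (hker : (hessMatrix a b c d e f).mulVec ![t, 1, 1, 1, 1, t] = 0) :
    (hessMatrix a b c d e f).mulVec ![1, 0, 0, 0, 0, -1]
        = (b - e) • ![1, 0, 0, 0, 0, -1] ∧
    (hessMatrix a b c d e f).mulVec ![0, 1, 0, 0, -1, 0]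
        = (d - f) • ![0, 1, 0, 0, -1, 0] ∧
    (hessMatrix a b c d e f).mulVec ![0, 0, 1, -1, 0, 0]
        = (d - f) • ![0, 0, 1, -1, 0, 0] ∧
    (hessMatrix a b c d e f).mulVec ![0, 1, -1, -1, 1, 0]
        = (-4 * c - 2 * t * a) • ![0, 1, -1, -1, 1, 0] ∧
    (hessMatrix a b c d e f).mulVec ![1 / t, -1 / 2, -1 / 2, -1 / 2, -1 / 2, 1 / t]
        = (-(2 * t + 4 / t) * a) • ![1 / t, -1 / 2, -1 / 2, -1 / 2, -1 / 2, 1 / t] := by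
  obtain ⟨h₀, h₁⟩ := (hessMatrix_mulVec_eq_zero_iff a b c d e f t).mp hker
  exact ⟨hessMatrix_mulVec_outer_antisymm a b c d e f,
    hessMatrix_mulVec_inner_antisymm₁₄ a b c d e f,
    hessMatrix_mulVec_inner_antisymm₂₃ a b c d e f,
    by rw [show -4 * c - 2 * t * a = d + f - 2 * c by linarith]
       exact hessMatrix_mulVec_alternating a b c d e f,
    hessMatrix_mulVec_symm_orthogonal a b c d e f ht.ne' h₀ h₁⟩
end
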